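/- Let ξ₁, …, ξ_m be independent random variables with common distribution P(ξ_n = 1) = p = 1 − P(ξ_n = 0), where 0 ≤ p ≤ 1, and let a₁, …, a_m be real numbers with σ² = Σ_{n=1}^m a_n². If t > 0 satisfies t · max_{1 ≤ n ≤ m} |a_n| ≤ 1, then E[ exp( t · Σ_{n=1}^m (p − ξ_n) a_n ) ] ≤ exp( p t² σ² ). -/

import Mathlib

open MeasureTheory ProbabilityTheory Filter

/-!
Each summand `(p - ξₙ) aₙ` is a centred Bernoulli variable, and with `c = t aₙ` (so `|c| ≤ 1`)
its moment generating function at `t` is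
`p e^{(p-1)c} + (1-p) e^{pc} = e^{pc} (1 + p (e^{-c} - 1)) ≤ exp (p (c + e^{-c} - 1)) ≤ exp (p c²)`,
using `1 + x ≤ eˣ` and `e^{-c} ≤ 1 - c + c²` for `|c| ≤ 1`. By independence the moment generating
function of the sum is the product of these.
-/

lemma mul_exp_add_one_sub_mul_exp_le_exp_mul_sq {p c : ℝ} (hp : 0 ≤ p) (hc : |c| ≤ 1) :
    p * Real.exp ((p - 1) * c) + (1 - p) * Real.exp (p * c) ≤ Real.exp (p * c ^ 2) := by
  have hexp_neg : Real.exp (-c) ≤ 1 - c + c ^ 2 := by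
    have := (abs_le.mp (Real.abs_exp_sub_one_sub_id_le (x := -c) (by rwa [abs_neg]))).2
    linarith [neg_sq c]
  calc p * Real.exp ((p - 1) * c) + (1 - p) * Real.exp (p * c)
      = Real.exp (p * c) * (p * (Real.exp (-c) - 1) + 1) := by
        rw [show (p - 1) * c = p * c + -c by ring, Real.exp_add]; ring
    _ ≤ Real.exp (p * c) * Real.exp (p * (Real.exp (-c) - 1)) := by
        gcongr; exact Real.add_one_le_exp _
    _ = Real.exp (p * (c + (Real.exp (-c) - 1))) := by rw [← Real.exp_add]; ring_nf
    _ ≤ Real.exp (p * c ^ 2) := by gcongr; linarith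

section Bernoulli

variable {Ω : Type*} [MeasurableSpace Ω] {P : Measure Ω} [IsProbabilityMeasure P]
  {X : Ω → ℝ} {p : ℝ}

lemma ae_eq_one_or_eq_zero_of_bernoulli (hX : Measurable X) (hp0 : 0 ≤ p) (hp1 : p ≤ 1)
    (h1 : P {ω | X ω = 1} = ENNReal.ofReal p) (h0 : P {ω | X ω = 0} = ENNReal.ofReal (1 - p)) :
    ∀ᵐ ω ∂P, X ω = 1 ∨ X ω = 0 := by
  have hdisj : Disjoint {ω | X ω = 1} {ω | X ω = 0} :=
    Set.disjoint_left.mpr fun ω h1 h0 => one_ne_zero (h1.symm.trans h0)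
  have hA : MeasurableSet {ω | X ω = 1} := hX (measurableSet_singleton 1)
  have hB : MeasurableSet {ω | X ω = 0} := hX (measurableSet_singleton 0)
  refine (mem_ae_iff_prob_eq_one (hA.union hB)).mpr ?_
  rw [measure_union hdisj hB, h1, h0,
    ← ENNReal.ofReal_add hp0 (sub_nonneg.mpr hp1), add_sub_cancel, ENNReal.ofReal_one]

lemma integral_comp_of_bernoulli (hX : Measurable X) (hp0 : 0 ≤ p) (hp1 : p ≤ 1)
    (h1 : P {ω | X ω = 1} = ENNReal.ofReal p) (h0 : P {ω | X ω = 0} = ENNReal.ofReal (1 - p))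
    (g : ℝ → ℝ) :
    ∫ ω, g (X ω) ∂P = p * g 1 + (1 - p) * g 0 := by
  have hA : MeasurableSet {ω | X ω = 1} := hX (measurableSet_singleton 1)
  have hB : MeasurableSet {ω | X ω = 0} := hX (measurableSet_singleton 0)
  have hsplit : (fun ω => g (X ω)) =ᵐ[P]
      fun ω => {ω | X ω = 1}.indicator (fun _ => g 1) ω +
        {ω | X ω = 0}.indicator (fun _ => g 0) ω := by
    filter_upwards [ae_eq_one_or_eq_zero_of_bernoulli hX hp0 hp1 h1 h0] with ω hω
    rcases hω with hω | hω <;> simp [Set.indicator, hω]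
  rw [integral_congr_ae hsplit, integral_add ((integrable_const _).indicator hA)
    ((integrable_const _).indicator hB), integral_indicator_const _ hA,
    integral_indicator_const _ hB, measureReal_def, measureReal_def, h1, h0,
    ENNReal.toReal_ofReal hp0, ENNReal.toReal_ofReal (sub_nonneg.mpr hp1), smul_eq_mul, smul_eq_mul]

lemma mgf_centered_bernoulli_mul_le (hX : Measurable X) (hp0 : 0 ≤ p) (hp1 : p ≤ 1)
    (h1 : P {ω | X ω = 1} = ENNReal.ofReal p) (h0 : P {ω | X ω = 0} = ENNReal.ofReal (1 - p))
    {a t : ℝ} (hta : |t * a| ≤ 1) :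
    mgf (fun ω => (p - X ω) * a) P t ≤ Real.exp (p * (t * a) ^ 2) := by
  rw [mgf, integral_comp_of_bernoulli hX hp0 hp1 h1 h0 fun x => Real.exp (t * ((p - x) * a))]
  convert mul_exp_add_one_sub_mul_exp_le_exp_mul_sq hp0 hta using 4 <;> ring

end Bernoulli

/-- The moment generating function bound: for independent Bernoulli(p) variables `ξₙ`, real
weights `aₙ` with `σ² = Σ aₙ²`, and `t > 0` with `t · max |aₙ| ≤ 1`, one has
`E[exp(t Σ (p - ξₙ) aₙ)] ≤ exp(p t² σ²)`. -/
theorem bernoulli_weighted_sum_mgf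
    {Ω : Type*} [MeasurableSpace Ω] (P : Measure Ω) [IsProbabilityMeasure P]
    (m : ℕ) (ξ : Fin m → Ω → ℝ) (hmeas : ∀ n, Measurable (ξ n))
    (p : ℝ) (hp0 : 0 ≤ p) (hp1 : p ≤ 1)
    (hindep : iIndepFun ξ P)
    (h1 : ∀ n, P {ω | ξ n ω = 1} = ENNReal.ofReal p)
    (h0 : ∀ n, P {ω | ξ n ω = 0} = ENNReal.ofReal (1 - p))
    (a : Fin m → ℝ) (σ2 B t : ℝ)
    (hσ : σ2 = ∑ n, (a n) ^ 2)
    (hB : IsGreatest {x : ℝ | ∃ n, x = |a n|} B)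
    (ht : 0 < t) (htB : t * B ≤ 1) :
    ∫ ω, Real.exp (t * ∑ n, (p - ξ n ω) * a n) ∂P ≤ Real.exp (p * t ^ 2 * σ2) := by
  set Y : Fin m → Ω → ℝ := fun n ω => (p - ξ n ω) * a n
  have hY : iIndepFun Y P := hindep.comp (fun n x => (p - x) * a n) fun n => by fun_prop
  have hta : ∀ n, |t * a n| ≤ 1 := fun n => by
    rw [abs_mul, abs_of_pos ht]
    exact (mul_le_mul_of_nonneg_left (hB.2 ⟨n, rfl⟩) ht.le).trans htB
  calc ∫ ω, Real.exp (t * ∑ n, (p - ξ n ω) * a n) ∂P = mgf (∑ n, Y n) P t := by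
        simp only [mgf, Finset.sum_apply, Y]
    _ = ∏ n, mgf (Y n) P t := hY.mgf_sum (fun n => by fun_prop) _
    _ ≤ ∏ n, Real.exp (p * (t * a n) ^ 2) := Finset.prod_le_prod (fun _ _ => mgf_nonneg)
        fun n _ => mgf_centered_bernoulli_mul_le (hmeas n) hp0 hp1 (h1 n) (h0 n) (hta n)
    _ = Real.exp (p * t ^ 2 * σ2) := by
        rw [← Real.exp_sum, hσ, Finset.mul_sum]; simp only [mul_pow, mul_assoc]
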